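/- arXiv:1107.1435 — 2 statements merged into one kernel-verified Lean document; each statement's English description precedes it below -/
import Mathlib

section
/- If ν is a strong limit cardinal, then any Tychonoff product of weakly initially <ν-compact topological spaces is weakly initially <ν-compact. -/
/-!
The proof goes through ultrafilter pseudocompactness (Comfort–Negrepontis). Fix a regular
ultrafilter `D` on a set `I` of size `λ`. A space that is weakly initially `2^λ`-compact is
`D`-pseudocompact, `D`-pseudocompactness is productive, and a `D`-pseudocompact space is weakly
initially `λ`-compact because `D` is regular. Since `ν` is a strong limit, `2^λ < ν` for `λ < ν`.
-/

open Cardinal Set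

universe u v

/-- `x` is a `D`-limit point of the family of sets `O`. -/
def DLimitSets {X : Type u} {I : Type v} [TopologicalSpace X]
    (D : Ultrafilter I) (O : I → Set X) (x : X) : Prop :=
  ∀ U ∈ nhds x, {i | (U ∩ O i).Nonempty} ∈ D

/-- `X` is `D`-pseudocompact. -/
def DPseudocompact (X : Type u) {I : Type v} [TopologicalSpace X]
    (D : Ultrafilter I) : Prop :=
  ∀ O : I → Set X, (∀ i, IsOpen (O i)) → (∀ i, (O i).Nonempty) →
    ∃ x : X, DLimitSets D O x

/-- Every open cover of cardinality at most `lam` has a finite subfamily with dense union. -/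
def WeaklyInitiallyCompact (X : Type u) [TopologicalSpace X] (lam : Cardinal.{u}) : Prop :=
  ∀ 𝒰 : Set (Set X), (∀ U ∈ 𝒰, IsOpen U) → ⋃₀ 𝒰 = Set.univ →
    Cardinal.mk 𝒰 ≤ lam →
    ∃ t : Finset (Set X), ↑t ⊆ 𝒰 ∧ Dense (⋃₀ (t : Set (Set X)))

/-- A regular ultrafilter over `I` (regular of degree `|I|`): there is an `I`-indexed
family of members of `D` every infinite subfamily of which has empty intersection. -/
def RegularUltrafilter {I : Type v} (D : Ultrafilter I) : Prop :=
  ∃ Z : I → Set I, (∀ i, Z i ∈ D) ∧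
    ∀ S : Set I, S.Infinite → ⋂ i ∈ S, Z i = ∅

lemma weaklyInitiallyCompact_of_lt_aleph0 {X : Type u} [TopologicalSpace X]
    {lam : Cardinal.{u}} (hlam : lam < ℵ₀) : WeaklyInitiallyCompact X lam := by
  intro 𝒰 _ hcover hcard
  have h𝒰 : 𝒰.Finite := lt_aleph0_iff_set_finite.mp (hcard.trans_lt hlam)
  refine ⟨h𝒰.toFinset, by simp, ?_⟩
  rw [Finite.coe_toFinset, hcover]
  exact dense_univ

/-- The regularity witness of `Filter.atTop` on finite subsets is `s ↦ Ici s`. -/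
lemma exists_regularUltrafilter_finset (α : Type u) :
    ∃ D : Ultrafilter (Finset α), RegularUltrafilter D := by
  refine ⟨Ultrafilter.of Filter.atTop, Ici, fun s => Ultrafilter.of_le _ (Filter.Ici_mem_atTop s),
    fun S hS => ?_⟩
  refine eq_empty_of_forall_notMem fun t ht => hS ?_
  refine t.powerset.finite_toSet.subset fun s hs => ?_
  simpa using mem_iInter₂.mp ht s hs

lemma exists_regularUltrafilter_of_aleph0_le {κ : Cardinal.{u}} (hκ : ℵ₀ ≤ κ) :
    ∃ I : Type u, #I = κ ∧ ∃ D : Ultrafilter I, RegularUltrafilter D := by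
  have : Infinite κ.out := infinite_iff.mpr (by rwa [mk_out])
  exact ⟨Finset κ.out, by rw [mk_finset_of_infinite, mk_out], exists_regularUltrafilter_finset _⟩

lemma RegularUltrafilter.exists_finite {I : Type*} {D : Ultrafilter I}
    (hD : RegularUltrafilter D) :
    ∃ Z : I → Set I, (∀ i, Z i ∈ D) ∧ ∀ i, {β | i ∈ Z β}.Finite := by
  obtain ⟨Z, hZD, hZ⟩ := hD
  refine ⟨Z, hZD, fun i => not_not.mp fun hinf => ?_⟩
  have hi : i ∈ ⋂ β ∈ {β | i ∈ Z β}, Z β := mem_iInter₂.mpr fun _ hβ => hβ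
  rw [hZ _ hinf] at hi
  exact hi

lemma DLimitSets.mono {X I : Type*} [TopologicalSpace X] {D : Ultrafilter I}
    {O O' : I → Set X} {x : X} (h : DLimitSets D O x) (hOO' : ∀ i, O i ⊆ O' i) :
    DLimitSets D O' x := fun U hU =>
  Filter.mem_of_superset (h U hU) fun _ ⟨y, hyU, hyO⟩ => ⟨y, hyU, hOO' _ hyO⟩

/-- If `x` is not a `D`-limit point of `O`, some open `U ∋ x` meets `O i` only for `i` in a set
outside `D`. Gathering, for each `S ∉ D`, all open sets whose trace is in `S` gives an open cover
of size `≤ 2^|I|`, and no finite union of its members can meet every `O i`. -/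
lemma DPseudocompact.of_weaklyInitiallyCompact {X I : Type u} [TopologicalSpace X]
    (D : Ultrafilter I) (h : WeaklyInitiallyCompact X #(Set I)) : DPseudocompact X D := by
  intro O hO hne
  by_contra! hlim
  let trace : Set X → Set I := fun A => {i | (A ∩ O i).Nonempty}
  let G : Set I → Set X := fun S => ⋃₀ {U | IsOpen U ∧ trace U ⊆ S}
  have trace_G : ∀ S, trace (G S) ⊆ S := by
    rintro S i ⟨y, ⟨U, ⟨-, hUS⟩, hyU⟩, hyO⟩
    exact hUS ⟨y, hyU, hyO⟩
  have hcover : ⋃₀ (G '' {S | S ∉ D}) = Set.univ := by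
    refine eq_univ_of_forall fun x => ?_
    obtain ⟨U, hU, hUD⟩ := not_forall₂.mp (hlim x)
    obtain ⟨V, hVU, hV, hxV⟩ := mem_nhds_iff.mp hU
    refine ⟨G (trace U), ⟨_, hUD, rfl⟩, V, ⟨hV, ?_⟩, hxV⟩
    exact fun i ⟨y, hyV, hyO⟩ => ⟨y, hVU hyV, hyO⟩
  obtain ⟨t, ht, hdense⟩ := h _ (by rintro _ ⟨S, -, rfl⟩; exact isOpen_sUnion fun U hU => hU.1)
    hcover (mk_image_le.trans (mk_set_le _))
  have htrace : trace (⋃₀ ↑t) = Set.univ :=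
    eq_univ_of_forall fun i => (hdense.inter_open_nonempty _ (hO i) (hne i)).mono
      (inter_comm _ _).subset
  have htrace_sub : trace (⋃₀ ↑t) ⊆ ⋃₀ (trace '' ↑t) :=
    fun i ⟨y, ⟨A, hA, hyA⟩, hyO⟩ => ⟨trace A, mem_image_of_mem _ hA, y, hyA, hyO⟩
  obtain ⟨_, ⟨A, hA, rfl⟩, hAD⟩ := (Ultrafilter.finite_sUnion_mem_iff (t.finite_toSet.image _)).mp
    (Filter.mem_of_superset (htrace ▸ Filter.univ_mem) htrace_sub)
  obtain ⟨S, hSD, rfl⟩ := ht hA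
  exact hSD (Filter.mem_of_superset hAD (trace_G S))

/-- Enumerate the cover injectively by `I`; the regularity witness `Z` makes
`F i = {U | i ∈ Z (index U)}` finite, so its closure misses a nonempty open `O i`. A `D`-limit
point of `O` lies in some `U` of the cover, and `U` meets `O i` for some `i ∈ Z (index U)`,
although `U ∈ F i`. -/
lemma WeaklyInitiallyCompact.of_dPseudocompact {X I : Type u} [TopologicalSpace X]
    {D : Ultrafilter I} (hD : RegularUltrafilter D) (h : DPseudocompact X D) :
    WeaklyInitiallyCompact X #I := by
  intro 𝒰 hopen hcover hcard
  by_contra! hcon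
  obtain ⟨Z, hZD, hZfin⟩ := hD.exists_finite
  obtain ⟨g⟩ := (le_def _ _).mp hcard
  let F : I → Set (Set X) := fun i => Subtype.val '' (g ⁻¹' {β | i ∈ Z β})
  have hFfin : ∀ i, (F i).Finite := fun i => ((hZfin i).preimage_embedding g).image _
  let O : I → Set X := fun i => (closure (⋃₀ F i))ᶜ
  have hOne : ∀ i, (O i).Nonempty := fun i => nonempty_compl.mpr fun hcl =>
    hcon (hFfin i).toFinset (by simp [F]) (by simpa [dense_iff_closure_eq] using hcl)
  obtain ⟨x, hx⟩ := h O (fun i => isClosed_closure.isOpen_compl) hOne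
  obtain ⟨U, hU, hxU⟩ := hcover ▸ mem_univ x
  obtain ⟨i, ⟨y, hyU, hyO⟩, hiZ⟩ := Ultrafilter.nonempty_of_mem
    (Filter.inter_mem (hx U ((hopen U hU).mem_nhds hxU)) (hZD (g ⟨U, hU⟩)))
  exact hyO (subset_closure ⟨U, ⟨⟨U, hU⟩, hiZ, rfl⟩, hyU⟩)

section Pi

variable {J : Type*} {X : J → Type*} [∀ j, TopologicalSpace (X j)]

lemma exists_univ_pi_subset_of_isOpen {s : Set (∀ j, X j)} (hs : IsOpen s) (hne : s.Nonempty) :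
    ∃ C : ∀ j, Set (X j), (∀ j, IsOpen (C j)) ∧ (∀ j, (C j).Nonempty) ∧ Set.univ.pi C ⊆ s := by
  classical
  obtain ⟨f, hf⟩ := hne
  obtain ⟨F, u, hu, hFu⟩ := isOpen_pi_iff.mp hs f hf
  refine ⟨(F : Set J).piecewise u fun _ => Set.univ, fun j => ?_, fun j => ?_, ?_⟩
  · by_cases hj : j ∈ F <;> simp [hj, (hu j _).1]
  · exact ⟨f j, by by_cases hj : j ∈ F <;> simp [hj, hu j]⟩
  · rwa [univ_pi_piecewise_univ]

/-- Only finitely many coordinates matter for a basic neighbourhood of `x`; the remaining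
coordinates of a witness are picked in the nonempty `C j i`. -/
lemma DLimitSets.univ_pi {I : Type*} {D : Ultrafilter I} {C : ∀ j, I → Set (X j)}
    (hC : ∀ j i, (C j i).Nonempty) {x : ∀ j, X j} (hx : ∀ j, DLimitSets D (C j) (x j)) :
    DLimitSets D (fun i => Set.univ.pi fun j => C j i) x := by
  intro U hU
  rw [nhds_pi, Filter.mem_pi] at hU
  obtain ⟨G, hG, t, ht, hGU⟩ := hU
  refine Filter.mem_of_superset ((Filter.biInter_mem hG).mpr fun j _ => hx j (t j) (ht j))
    fun i hi => ?_
  have hpt : ∀ j, ∃ z, (j ∈ G → z ∈ t j) ∧ z ∈ C j i := fun j => by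
    by_cases hj : j ∈ G
    · obtain ⟨z, hzt, hzC⟩ := mem_iInter₂.mp hi j hj
      exact ⟨z, fun _ => hzt, hzC⟩
    · exact ⟨(hC j i).some, fun h => absurd h hj, (hC j i).some_mem⟩
  choose z hzt hzC using hpt
  exact ⟨z, hGU hzt, fun j _ => hzC j⟩

lemma DPseudocompact.pi {I : Type*} {D : Ultrafilter I} (h : ∀ j, DPseudocompact (X j) D) :
    DPseudocompact (∀ j, X j) D := by
  intro O hO hne
  choose C hCopen hCne hCO using fun i => exists_univ_pi_subset_of_isOpen (hO i) (hne i)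
  choose x hx using fun j => h j (fun i => C i j) (fun i => hCopen i j) (fun i => hCne i j)
  exact ⟨x, (DLimitSets.univ_pi (fun j i => hCne i j) hx).mono hCO⟩

end Pi

theorem product_weaklyInitiallyLtCompact (ν : Cardinal.{u})
    (hν : ν.IsStrongLimit)
    {J : Type u} {X : J → Type u} [∀ j, TopologicalSpace (X j)]
    (hX : ∀ j, ∀ lam < ν, WeaklyInitiallyCompact (X j) lam) :
    ∀ lam < ν, WeaklyInitiallyCompact (∀ j, X j) lam := by
  intro lam hlam
  rcases lt_or_ge lam ℵ₀ with hfin | hinf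
  · exact weaklyInitiallyCompact_of_lt_aleph0 hfin
  obtain ⟨I, rfl, D, hD⟩ := exists_regularUltrafilter_of_aleph0_le hinf
  have hpc : ∀ j, DPseudocompact (X j) D := fun j =>
    .of_weaklyInitiallyCompact D (hX j _ (by rw [mk_set]; exact hν.isStrongPrelimit hlam))
  exact .of_dPseudocompact hD (DPseudocompact.pi hpc)
end

section
/- Let X be a topological space and F a family of subsets of X. The following are equivalent: (1) X is F-[ω,λ]-compact for every infinite cardinal λ; (2) X is F-D-compact for every ultrafilter D; (3) for every infinite cardinal λ there exists a regular ultrafilter D over λ such that X is F-D-compact. -/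
open Cardinal Set

universe u v

/-- `X` is `F`-`[ω,λ]`-compact. -/
def FOmegaLamCompact (X : Type u) [TopologicalSpace X]
    (F : Set (Set X)) (lam : Cardinal.{u}) : Prop :=
  ∀ 𝒰 : Set (Set X), (∀ U ∈ 𝒰, IsOpen U) → ⋃₀ 𝒰 = Set.univ →
    Cardinal.mk 𝒰 ≤ lam →
    ∃ t : Finset (Set X), ↑t ⊆ 𝒰 ∧
      ∀ A ∈ F, (A ∩ ⋃₀ (t : Set (Set X))).Nonempty

/-- `X` is `F`-`D`-compact. -/
def FDCompact (X : Type u) {I : Type v} [TopologicalSpace X]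
    (F : Set (Set X)) (D : Ultrafilter I) : Prop :=
  ∀ f : I → Set X, (∀ i, f i ∈ F) → ∃ x : X, DLimitSets D f x

/-!
(1) ⇒ (2): if `f : I → F` has no `D`-limit point, every `x` has an open neighbourhood `V x`
missing `f i` for `D`-almost all `i`. A finite subfamily of the cover `{V x}` meeting every member
of `F` meets some `f i` that all of its members miss.

(2) ⇒ (3): an ultrafilter on the finite subsets of `λ` finer than `atTop` is regular, witnessed by
`Z s = {u | s ∈ u}` (after identifying `λ` with its finite subsets).

(3) ⇒ (1): index the cover injectively by `I`. By regularity each `j` lies in only finitely many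
`Z i`, so the members `U` with `j ∈ Z (index U)` form a finite subfamily `t j`. If every `t j`
misses some `A j ∈ F`, take a `D`-limit point `x ∈ U` of `A`: for `D`-many `j` both `U` meets
`A j` and `j ∈ Z (index U)`, i.e. `U ∈ t j`, a contradiction.
-/

section

variable {X : Type u} [TopologicalSpace X] {F : Set (Set X)}

theorem exists_isOpen_eventually_disjoint_of_not_dLimitSets {I : Type v} {D : Ultrafilter I}
    {f : I → Set X} {x : X} (hx : ¬ DLimitSets D f x) :
    ∃ V, IsOpen V ∧ x ∈ V ∧ ∀ᶠ i in (D : Filter I), Disjoint V (f i) := by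
  simp only [DLimitSets, not_forall] at hx
  obtain ⟨U, hU, hUD⟩ := hx
  obtain ⟨V, hVU, hVopen, hxV⟩ := mem_nhds_iff.mp hU
  refine ⟨V, hVopen, hxV, ?_⟩
  filter_upwards [Ultrafilter.compl_mem_iff_notMem.mpr hUD] with i hi
  exact Set.disjoint_iff_inter_eq_empty.mpr <|
    Set.not_nonempty_iff_eq_empty.mp fun ⟨y, hyV, hyf⟩ => hi ⟨y, hVU hyV, hyf⟩

theorem FOmegaLamCompact.fdCompact {lam : Cardinal.{u}} (h : FOmegaLamCompact X F lam)
    (hX : #X ≤ lam) {I : Type v} (D : Ultrafilter I) : FDCompact X F D := by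
  intro f hf
  by_contra! hnot
  choose V hVopen hxV hVD using
    fun x => exists_isOpen_eventually_disjoint_of_not_dLimitSets (hnot x)
  obtain ⟨t, htV, htF⟩ := h (range V) (by rintro _ ⟨x, rfl⟩; exact hVopen x)
    (eq_univ_of_forall fun x => ⟨V x, mem_range_self x, hxV x⟩) (mk_range_le.trans hX)
  have hdisj : ∀ᶠ i in (D : Filter I), ∀ U ∈ t, Disjoint U (f i) :=
    t.eventually_all.mpr fun U hU => by
      obtain ⟨x, rfl⟩ := htV hU
      exact hVD x
  obtain ⟨i, hi⟩ := hdisj.exists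
  obtain ⟨y, hyf, U, hUt, hyU⟩ := htF (f i) (hf i)
  exact Set.disjoint_left.mp (hi U hUt) hyU hyf

theorem RegularUltrafilter.of_le_atTop {K : Type v} [Infinite K] {D : Ultrafilter (Finset K)}
    (hD : ↑D ≤ (Filter.atTop : Filter (Finset K))) : RegularUltrafilter D := by
  obtain ⟨e⟩ : Nonempty (Finset K ≃ K) := Cardinal.eq.mp (mk_finset_of_infinite K)
  refine ⟨fun s => {u | e s ∈ u}, fun s => hD (Filter.mem_atTop_sets.mpr
    ⟨{e s}, fun u hu => Finset.singleton_subset_iff.mp hu⟩), fun S hS => ?_⟩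
  refine eq_empty_of_forall_notMem fun u hu => hS ?_
  exact (u.finite_toSet.preimage e.injective.injOn).subset fun s hs => mem_iInter₂.mp hu s hs

theorem exists_regularUltrafilter {lam : Cardinal.{v}} (hlam : ℵ₀ ≤ lam) :
    ∃ (I : Type v) (D : Ultrafilter I), #I = lam ∧ RegularUltrafilter D := by
  have : Infinite lam.out := Cardinal.infinite_iff.mpr (by rwa [mk_out])
  exact ⟨Finset lam.out, Ultrafilter.of Filter.atTop,
    by rw [mk_finset_of_infinite, mk_out], .of_le_atTop (Ultrafilter.of_le _)⟩

theorem RegularUltrafilter.exists_finite_setOf_mem {I : Type v} {D : Ultrafilter I}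
    (hD : RegularUltrafilter D) :
    ∃ Z : I → Set I, (∀ i, Z i ∈ D) ∧ ∀ j, {i | j ∈ Z i}.Finite := by
  obtain ⟨Z, hZD, hZ⟩ := hD
  refine ⟨Z, hZD, fun j => not_not.mp fun hinf => ?_⟩
  simpa using (hZ _ hinf).subset (mem_iInter₂.mpr fun i hi => hi : j ∈ ⋂ i ∈ {i | j ∈ Z i}, Z i)

theorem RegularUltrafilter.fOmegaLamCompact {I : Type u} {D : Ultrafilter I}
    (hD : RegularUltrafilter D) (h : FDCompact X F D) : FOmegaLamCompact X F #I := by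
  intro 𝒰 hopen hcover hcard
  obtain ⟨Z, hZD, hZfin⟩ := hD.exists_finite_setOf_mem
  obtain ⟨emb⟩ := Cardinal.le_def _ _ |>.mp hcard
  have hfin : ∀ j, (Subtype.val '' (emb ⁻¹' {i | j ∈ Z i}) : Set (Set X)).Finite :=
    fun j => ((hZfin j).preimage emb.injective.injOn).image _
  by_contra! hcon
  choose A hAF hAt using fun j => hcon (hfin j).toFinset (by simp [Set.image_subset_iff])
  obtain ⟨x, hx⟩ := h A hAF
  obtain ⟨U, hU, hxU⟩ := (hcover.symm ▸ mem_univ x : x ∈ ⋃₀ 𝒰)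
  obtain ⟨j, ⟨y, hyU, hyA⟩, hjZ⟩ := Filter.nonempty_of_mem <|
    Filter.inter_mem (hx U ((hopen U hU).mem_nhds hxU)) (hZD (emb ⟨U, hU⟩))
  exact (hAt j).subset ⟨hyA, U, by simpa using ⟨hU, hjZ⟩, hyU⟩

end

theorem fOmegaLamCompact_tfae {X : Type u} [TopologicalSpace X] (F : Set (Set X)) :
    ((∀ lam : Cardinal.{u}, Cardinal.aleph0 ≤ lam → FOmegaLamCompact X F lam) ↔
        (∀ (I : Type u) (D : Ultrafilter I), FDCompact X F D)) ∧
      ((∀ (I : Type u) (D : Ultrafilter I), FDCompact X F D) ↔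
        (∀ lam : Cardinal.{u}, Cardinal.aleph0 ≤ lam →
          ∃ (I : Type u) (D : Ultrafilter I), Cardinal.mk I = lam ∧
            RegularUltrafilter D ∧ FDCompact X F D)) := by
  have h12 : (∀ lam : Cardinal.{u}, ℵ₀ ≤ lam → FOmegaLamCompact X F lam) →
      ∀ (I : Type u) (D : Ultrafilter I), FDCompact X F D := fun h _ D =>
    (h _ (le_max_right #X ℵ₀)).fdCompact (le_max_left _ _) D
  have h23 : (∀ (I : Type u) (D : Ultrafilter I), FDCompact X F D) →
      ∀ lam : Cardinal.{u}, ℵ₀ ≤ lam → ∃ (I : Type u) (D : Ultrafilter I),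
        #I = lam ∧ RegularUltrafilter D ∧ FDCompact X F D := fun h _ hlam => by
    obtain ⟨I, D, hI, hD⟩ := exists_regularUltrafilter hlam
    exact ⟨I, D, hI, hD, h I D⟩
  have h31 : (∀ lam : Cardinal.{u}, ℵ₀ ≤ lam → ∃ (I : Type u) (D : Ultrafilter I),
        #I = lam ∧ RegularUltrafilter D ∧ FDCompact X F D) →
      ∀ lam : Cardinal.{u}, ℵ₀ ≤ lam → FOmegaLamCompact X F lam := fun h lam hlam => by
    obtain ⟨I, D, rfl, hD, hDc⟩ := h lam hlam
    exact hD.fOmegaLamCompact hDc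
  exact ⟨⟨h12, h31 ∘ h23⟩, ⟨h23, h12 ∘ h31⟩⟩
end
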